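/- For any W ∈ ℝ^{m×r} and f satisfying the standard assumption, β(W) ≥ σ(W), where β(W) = min(ν_β(W), (1/√2)γ_β(W)) with ν_β(W) = min_j ‖R^f_{W(:,J)}(w_j)‖₂ (J = {1,...,r}\{j}) and γ_β(W) = min over i≠j and J ⊆ {1,...,r}\{i,j} of ‖R^f_{W(:,J)}(w_i) - R^f_{W(:,J)}(w_j)‖₂, and σ(W) is the smallest singular value (0 if m < r). -/

import Mathlib

noncomputable section

open scoped BigOperators

abbrev E (m : ℕ) := EuclideanSpace ℝ (Fin m)

def toE {m : ℕ} (x : Fin m → ℝ) : E m := WithLp.toLp 2 x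

/-- The unit simplex `Δ = {y | y ≥ 0, ∑ y ≤ 1}`. -/
def simplex (n : Type*) [Fintype n] : Set (n → ℝ) :=
  {y | (∀ i, 0 ≤ y i) ∧ ∑ i, y i ≤ 1}

/-- Assumption 2 of the paper: `f` is `μ`-strongly convex with `L`-Lipschitz
gradient `f'`, and `0` is its global minimizer with `f 0 = 0`. -/
structure GoodF {m : ℕ} (f : E m → ℝ) (f' : E m → E m) (μ L : ℝ) : Prop where
  mu_pos : 0 < μ
  grad : ∀ x, HasGradientAt f (f' x) x
  lip : ∀ x y : E m, ‖f' x - f' y‖ ≤ L * ‖x - y‖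
  sconv : ∀ x y : E m, ∀ δ : ℝ, 0 ≤ δ → δ ≤ 1 →
    f (δ • x + (1 - δ) • y) ≤ δ * f x + (1 - δ) * f y - μ / 2 * δ * (1 - δ) * ‖x - y‖ ^ 2
  f_zero : f 0 = 0
  min_zero : ∀ x, f 0 ≤ f x

/-- A minimizer over the unit simplex of `y ↦ f (x - B y)` (chosen via choice). -/
def argminSimplex {m : ℕ} {n : Type*} [Fintype n] (f : E m → ℝ)
    (B : Matrix (Fin m) n ℝ) (x : E m) : n → ℝ :=
  Classical.epsilon fun y => y ∈ simplex n ∧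
    ∀ z ∈ simplex n, f (x - toE (B.mulVec y)) ≤ f (x - toE (B.mulVec z))

/-- The residual `R_B^f(x) = x - B y*` where `y* = argmin_{y ∈ Δ} f (x - B y)`. -/
def resid {m : ℕ} {n : Type*} [Fintype n] (f : E m → ℝ)
    (B : Matrix (Fin m) n ℝ) (x : E m) : E m :=
  x - toE (B.mulVec (argminSimplex f B x))

/-- Column-wise residual matrix `R_B^f(A)`. -/
def residMat {m : ℕ} {n k : Type*} [Fintype n] (f : E m → ℝ)
    (B : Matrix (Fin m) n ℝ) (A : Matrix (Fin m) k ℝ) : Matrix (Fin m) k ℝ :=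
  fun i j => resid f B (toE fun i' => A i' j) i

/-- `‖N‖_{1,2}`: the maximum `ℓ₂` column norm. -/
def norm12 {m : ℕ} {n : Type*} [Fintype n] (N : Matrix (Fin m) n ℝ) : ℝ :=
  sSup {c | ∃ j, c = ‖toE fun i => N i j‖}

/-- `α(W)`: minimum distance between a column of `W` and the convex hull of the
other columns of `W` and the origin. -/
def alpha {m r : ℕ} (W : Matrix (Fin m) (Fin r) ℝ) : ℝ :=
  sInf {c | ∃ (j : Fin r) (x : Fin r → ℝ), x ∈ simplex (Fin r) ∧ x j = 0 ∧
    c = ‖toE (fun i => W i j) - toE (W.mulVec x)‖}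

/-- `σ(W)`: smallest singular value (`min_{‖z‖₂ ≥ 1} ‖Wz‖₂`) if `m ≥ r`, and `0` if `m < r`. -/
def smin {m r : ℕ} (W : Matrix (Fin m) (Fin r) ℝ) : ℝ :=
  if r ≤ m then sInf {c | ∃ z : Fin r → ℝ, 1 ≤ ‖toE z‖ ∧ c = ‖toE (W.mulVec z)‖} else 0

/-- `[B, x]`: append the column `x` to `B`. -/
def appendCol {m s : ℕ} (B : Matrix (Fin m) (Fin s) ℝ) (x : E m) :
    Matrix (Fin m) (Fin (s + 1)) ℝ :=
  fun i => Fin.snoc (fun j => B i j) (x i)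

/-- `[A, B]`: horizontal concatenation. -/
def appendMat {m k s : ℕ} (A : Matrix (Fin m) (Fin k) ℝ) (B : Matrix (Fin m) (Fin s) ℝ) :
    Matrix (Fin m) (Fin (k + s)) ℝ :=
  fun i => Fin.append (fun j => A i j) (fun j => B i j)

/-- `ω(P) = min (min_i ‖p_i‖₂, (1/√2) min_{i ≠ j} ‖p_i - p_j‖₂)`. -/
def omegaM {m : ℕ} {k : Type*} [Fintype k] (P : Matrix (Fin m) k ℝ) : ℝ :=
  sInf ({c | ∃ i, c = ‖toE fun a => P a i‖} ∪
    {c | ∃ i j, i ≠ j ∧ c = (Real.sqrt 2)⁻¹ * ‖(toE fun a => P a i) - toE fun a => P a j‖})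

/-- `β(W) = min (ν_β(W), γ_β(W)/√2)` as in the paper. -/
def beta {m r : ℕ} (f : E m → ℝ) (W : Matrix (Fin m) (Fin r) ℝ) : ℝ :=
  sInf ({c | ∃ j : Fin r,
      c = ‖resid f (W.submatrix id fun p : {i // i ≠ j} => (p : Fin r)) (toE fun a => W a j)‖} ∪
    {c | ∃ (i j : Fin r) (J : Finset (Fin r)), i ≠ j ∧ i ∉ J ∧ j ∉ J ∧
      c = (Real.sqrt 2)⁻¹ *
        ‖resid f (W.submatrix id fun p : J => (p : Fin r)) (toE fun a => W a i) -
         resid f (W.submatrix id fun p : J => (p : Fin r)) (toE fun a => W a j)‖})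

/-- Singular values of `B` in nonincreasing order (`i`-th largest at index `i`). -/
def singVals {m s : ℕ} (B : Matrix (Fin m) (Fin s) ℝ) : Fin s → ℝ := fun i =>
  Real.sqrt (((show (Matrix.transpose B * B).IsHermitian by
      simpa using Matrix.isHermitian_conjTranspose_mul_self B).eigenvalues ∘
    Tuple.sort (show (Matrix.transpose B * B).IsHermitian by
      simpa using Matrix.isHermitian_conjTranspose_mul_self B).eigenvalues) i.rev)

/-- The spectral norm `‖N‖₂` (ℓ₂ operator norm). -/
def spec {m s : ℕ} (N : Matrix (Fin m) (Fin s) ℝ) : ℝ :=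
  ‖LinearMap.toContinuousLinearMap (Matrix.toEuclideanLin N)‖

/-!
For `J ⊆ {1,…,r} \ {j}`, the residual `R^f_{W(:,J)}(w_j) = w_j - W(:,J) y*` equals `W z` for
the coefficient vector `z = e_j - (y* extended by zero)`, whose `j`-th entry is `1`; hence
`‖R(w_j)‖ ≥ σ(W) ‖z‖ ≥ σ(W)`. For `i, j ∉ J` the difference of two residuals is again `W z`,
now with `z_i = 1` and `z_j = -1`, so `‖z‖ ≥ √2`.
-/

open Matrix

section ZeroExtension

variable {l n R : Type*} [NonUnitalNonAssocSemiring R]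

lemma extend_zero_apply_of_not {p : n → Prop} (y : {k // p k} → R) {j : n} (hj : ¬ p j) :
    Subtype.val.extend y 0 j = 0 :=
  Function.extend_apply' _ _ _ fun ⟨k, hk⟩ => hj (hk ▸ k.2)

lemma submatrix_val_mulVec [Fintype n] (W : Matrix l n R) (p : n → Prop) [DecidablePred p]
    [Fintype {k // p k}] (y : {k // p k} → R) :
    W.submatrix id Subtype.val *ᵥ y = W *ᵥ Subtype.val.extend y 0 := by
  ext a
  have hout : ∀ k ∈ Finset.univ.filter (fun k => ¬ p k), W a k * Subtype.val.extend y 0 k = 0 :=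
    fun k hk => by rw [extend_zero_apply_of_not y (Finset.mem_filter.1 hk).2, mul_zero]
  symm
  rw [mulVec, dotProduct, ← Finset.sum_filter_add_sum_filter_not Finset.univ p,
    Finset.sum_eq_zero hout, add_zero, Finset.sum_subtype (F := ‹_›) _ (by simp)]
  simp [mulVec, dotProduct]

end ZeroExtension

section

variable {m r : ℕ}

lemma exists_resid_submatrix_col_eq {n : Type*} [Fintype n] [DecidableEq n] (f : E m → ℝ)
    (W : Matrix (Fin m) n ℝ) (p : n → Prop) [DecidablePred p] [Fintype {k // p k}] (j : n) :
    ∃ y : {k // p k} → ℝ,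
      resid f (W.submatrix id (Subtype.val : {k // p k} → n)) (toE fun a => W a j) =
        toE (W *ᵥ (Pi.single j 1 - Subtype.val.extend y 0)) :=
  ⟨_, by rw [resid, submatrix_val_mulVec, mulVec_sub, mulVec_single_one]; rfl⟩

lemma abs_le_norm_toE (z : Fin r → ℝ) (j : Fin r) : |z j| ≤ ‖toE z‖ :=
  PiLp.norm_apply_le (toE z) j

lemma sq_add_sq_le_norm_toE_sq (z : Fin r → ℝ) {i j : Fin r} (hij : i ≠ j) :
    z i ^ 2 + z j ^ 2 ≤ ‖toE z‖ ^ 2 := by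
  calc z i ^ 2 + z j ^ 2 = ∑ k ∈ {i, j}, ‖(toE z).ofLp k‖ ^ 2 := by
        simp [Finset.sum_pair hij, toE]
    _ ≤ ∑ k, ‖(toE z).ofLp k‖ ^ 2 :=
        Finset.sum_le_sum_of_subset_of_nonneg (Finset.subset_univ _) fun k _ _ => sq_nonneg _
    _ = ‖toE z‖ ^ 2 := (EuclideanSpace.norm_sq_eq _).symm

lemma smin_nonneg (W : Matrix (Fin m) (Fin r) ℝ) : 0 ≤ smin W := by
  unfold smin
  split_ifs
  · exact Real.sInf_nonneg fun c ⟨_, _, hc⟩ => hc ▸ norm_nonneg _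
  · rfl

lemma smin_le_norm_mulVec (W : Matrix (Fin m) (Fin r) ℝ) {z : Fin r → ℝ} (hz : 1 ≤ ‖toE z‖) :
    smin W ≤ ‖toE (W *ᵥ z)‖ := by
  unfold smin
  split_ifs
  · exact csInf_le ⟨0, fun c ⟨_, _, hc⟩ => hc ▸ norm_nonneg _⟩ ⟨z, hz, rfl⟩
  · exact norm_nonneg _

lemma smin_mul_norm_le_norm_mulVec (W : Matrix (Fin m) (Fin r) ℝ) (z : Fin r → ℝ) :
    smin W * ‖toE z‖ ≤ ‖toE (W *ᵥ z)‖ := by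
  rcases eq_or_lt_of_le (norm_nonneg (toE z)) with hz | hz
  · rw [← hz, mul_zero]
    exact norm_nonneg _
  have hscale : 1 ≤ ‖toE (‖toE z‖⁻¹ • z)‖ := by
    rw [toE, WithLp.toLp_smul, norm_smul, norm_inv, norm_norm]
    exact (inv_mul_cancel₀ hz.ne').ge
  have := smin_le_norm_mulVec W hscale
  rwa [mulVec_smul, toE, WithLp.toLp_smul, norm_smul, norm_inv, norm_norm, ← div_eq_inv_mul,
    le_div_iff₀ hz] at this

lemma smin_eq_zero_of_fin_zero (W : Matrix (Fin m) (Fin 0) ℝ) : smin W = 0 := by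
  have hempty : {c | ∃ z : Fin 0 → ℝ, 1 ≤ ‖toE z‖ ∧ c = ‖toE (W *ᵥ z)‖} = ∅ :=
    Set.eq_empty_of_forall_notMem fun c ⟨z, hz, _⟩ => by
      norm_num [toE, EuclideanSpace.norm_eq] at hz
  rw [smin, if_pos (Nat.zero_le m), hempty, Real.sInf_empty]

lemma smin_le_norm_resid (f : E m → ℝ) (W : Matrix (Fin m) (Fin r) ℝ) (p : Fin r → Prop)
    [DecidablePred p] [Fintype {k // p k}] {j : Fin r} (hj : ¬ p j) :
    smin W ≤
      ‖resid f (W.submatrix id (Subtype.val : {k // p k} → Fin r)) (toE fun a => W a j)‖ := by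
  obtain ⟨y, hy⟩ := exists_resid_submatrix_col_eq f W p j
  set z := Pi.single j 1 - Subtype.val.extend y 0
  have hzj : z j = 1 := by simp [z, extend_zero_apply_of_not y hj]
  calc smin W = smin W * |z j| := by simp [hzj]
    _ ≤ smin W * ‖toE z‖ := mul_le_mul_of_nonneg_left (abs_le_norm_toE z j) (smin_nonneg W)
    _ ≤ _ := hy ▸ smin_mul_norm_le_norm_mulVec W z

lemma smin_le_inv_sqrt_two_mul_norm_resid_sub (f : E m → ℝ) (W : Matrix (Fin m) (Fin r) ℝ)
    (p : Fin r → Prop) [DecidablePred p] [Fintype {k // p k}] {i j : Fin r} (hij : i ≠ j)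
    (hi : ¬ p i) (hj : ¬ p j) :
    smin W ≤ (√2)⁻¹ *
      ‖resid f (W.submatrix id (Subtype.val : {k // p k} → Fin r)) (toE fun a => W a i) -
        resid f (W.submatrix id (Subtype.val : {k // p k} → Fin r)) (toE fun a => W a j)‖ := by
  obtain ⟨yi, hyi⟩ := exists_resid_submatrix_col_eq f W p i
  obtain ⟨yj, hyj⟩ := exists_resid_submatrix_col_eq f W p j
  set z := (Pi.single i 1 - Subtype.val.extend yi 0) - (Pi.single j 1 - Subtype.val.extend yj 0)
  have hzi : z i = 1 := by
    simp [z, extend_zero_apply_of_not yi hi, extend_zero_apply_of_not yj hi, hij]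
  have hzj : z j = -1 := by
    simp [z, extend_zero_apply_of_not yi hj, extend_zero_apply_of_not yj hj, hij.symm]
  have hz : √2 ≤ ‖toE z‖ := by
    have := sq_add_sq_le_norm_toE_sq z hij
    rw [hzi, hzj] at this
    exact (Real.sqrt_le_left (norm_nonneg _)).mpr (by norm_num at this; linarith)
  rw [le_inv_mul_iff₀ (by positivity), hyi, hyj, toE, toE, ← WithLp.toLp_sub, ← mulVec_sub]
  calc √2 * smin W ≤ ‖toE z‖ * smin W := mul_le_mul_of_nonneg_right hz (smin_nonneg W)
    _ ≤ _ := (mul_comm _ _).trans_le (smin_mul_norm_le_norm_mulVec W z)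

end

theorem stmt14_general (m r : ℕ) (f : E m → ℝ) (W : Matrix (Fin m) (Fin r) ℝ) :
    smin W ≤ beta f W := by
  rcases Nat.eq_zero_or_pos r with rfl | hr
  · rw [smin_eq_zero_of_fin_zero]
    exact Real.sInf_nonneg fun c hc => by rcases hc with ⟨j, _⟩ | ⟨j, _⟩ <;> exact j.elim0
  refine le_csInf ⟨_, Or.inl ⟨⟨0, hr⟩, rfl⟩⟩ ?_
  rintro c (⟨j, rfl⟩ | ⟨i, j, J, hij, hi, hj, rfl⟩)
  · exact smin_le_norm_resid f W (· ≠ j) (not_not.mpr rfl)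
  · exact smin_le_inv_sqrt_two_mul_norm_resid_sub f W (· ∈ J) hij hi hj

theorem stmt14 (m r : ℕ) (μ L : ℝ) (f : E m → ℝ) (f' : E m → E m) (hf : GoodF f f' μ L)
    (W : Matrix (Fin m) (Fin r) ℝ) :
    smin W ≤ beta f W :=
  stmt14_general m r f W
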